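/- Fix x ∈ ℝⁿ, a unit vector u ∈ ℝⁿ, and p ∈ (0,1). For every measurable function f : ℝⁿ → [0,1] satisfying E_{X ~ N(0, Iₙ)}[f(x + X)] = p, one has E_{X ~ N(0, Iₙ)}[f(x + X) · (X · u)] ≤ (1/√(2π)) · exp(-(Φ⁻¹(p))²/2); moreover this bound is attained by the half-space indicator h(z) = 1{(z - x) · u ≥ -Φ⁻¹(p)}. -/

import Mathlib

/-!
The law of `⟪X, u⟫` under `N(0, Iₙ)` is `N(0, 1)`: the measure with density
`(2π)^{-n/2} exp(-‖t‖²/2)` has characteristic function `exp(-‖t‖²/2)`, so it is the Gaussian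
measure with identity covariance, whose image under a unit linear form is `N(0, 1)`.
With `c = Φ⁻¹(p)` and `H` the indicator of `{⟪X, u⟫ ≥ -c}`, one has
`(H - f) (⟪X, u⟫ + c) ≥ 0` pointwise; integrating and using `E[f] = p = E[H]` gives
`E[f ⟪X, u⟫] ≤ E[H ⟪X, u⟫] = ∫_{-c}^∞ s φ(s) ds = φ(c)`.
-/

open MeasureTheory Real

/-- The standard `n`-dimensional Gaussian measure `N(0, Iₙ)`, with density
`(2π)^{-n/2} exp(-‖t‖²/2)` with respect to Lebesgue measure. -/
noncomputable def stdGaussian (n : ℕ) : Measure (EuclideanSpace ℝ (Fin n)) :=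
  volume.withDensity fun t =>
    ENNReal.ofReal ((2 * π) ^ (-(n : ℝ) / 2) * Real.exp (-‖t‖ ^ 2 / 2))

/-- The standard Gaussian CDF `Φ(a) = (1/√(2π)) ∫_{-∞}^a exp(-s²/2) ds`. -/
noncomputable def stdGaussianCDF (a : ℝ) : ℝ :=
  (Real.sqrt (2 * π))⁻¹ * ∫ s in Set.Iic a, Real.exp (-s ^ 2 / 2)

/-- The inverse `Φ⁻¹ : (0,1) → ℝ` of the standard Gaussian CDF. -/
noncomputable def stdGaussianCDFInv : ℝ → ℝ :=
  Function.invFun stdGaussianCDF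

open Set
open ProbabilityTheory (gaussianReal gaussianPDFReal cdf IsGaussian)
open scoped RealInnerProductSpace Topology

section StandardGaussian

variable {V : Type*} [NormedAddCommGroup V] [InnerProductSpace ℝ V] [FiniteDimensional ℝ V]
  [MeasurableSpace V] [BorelSpace V]

variable (V) in
noncomputable def gaussianDensity (v : V) : ℝ :=
  (2 * π) ^ (-(Module.finrank ℝ V : ℝ) / 2) * Real.exp (-‖v‖ ^ 2 / 2)

theorem integral_gaussianDensity : ∫ v, gaussianDensity V v = 1 := by
  have h := GaussianFourier.integral_rexp_neg_mul_sq_norm (V := V) (b := 1 / 2) (by norm_num)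
  simp_rw [gaussianDensity, show ∀ r : ℝ, -r / 2 = -(1 / 2) * r from fun r => by ring]
  rw [integral_const_mul, h, show π / (1 / 2) = 2 * π by ring, ← Real.rpow_add (by positivity)]
  convert Real.rpow_zero (2 * π) using 2
  ring

theorem integral_cexp_inner_mul_gaussianDensity (t : V) :
    ∫ v, Complex.exp (⟪v, t⟫ * Complex.I) * gaussianDensity V v = Complex.exp (-‖t‖ ^ 2 / 2) := by
  have h := GaussianFourier.integral_cexp_neg_mul_sq_norm_add (V := V) (b := 1 / 2) (by norm_num)
    Complex.I t
  have hpow : (π / (1 / 2 : ℂ)) ^ ((Module.finrank ℝ V : ℂ) / 2) =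
      (((2 * π) ^ ((Module.finrank ℝ V : ℝ) / 2) : ℝ) : ℂ) := by
    rw [Complex.ofReal_cpow (by positivity)]
    push_cast
    ring_nf
  rw [hpow] at h
  have hintegrand (v : V) : Complex.exp (⟪v, t⟫ * Complex.I) * gaussianDensity V v =
      (((2 * π) ^ (-(Module.finrank ℝ V : ℝ) / 2) : ℝ) : ℂ) *
        Complex.exp (-(1 / 2) * ‖v‖ ^ 2 + Complex.I * ⟪t, v⟫) := by
    rw [gaussianDensity, Complex.ofReal_mul, Complex.ofReal_exp, mul_left_comm, ← Complex.exp_add,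
      real_inner_comm]
    push_cast
    ring_nf
  simp_rw [hintegrand]
  rw [integral_const_mul, h, ← mul_assoc, ← Complex.ofReal_mul, ← Real.rpow_add (by positivity),
    neg_div, neg_add_cancel, Real.rpow_zero]
  simp
  ring_nf

theorem withDensity_gaussianDensity :
    volume.withDensity (fun v => ENNReal.ofReal (gaussianDensity V v)) =
      ProbabilityTheory.stdGaussian V := by
  have hint : Integrable (gaussianDensity V) :=
    .of_integral_ne_zero (by rw [integral_gaussianDensity]; exact one_ne_zero)
  have := isFiniteMeasure_withDensity_ofReal hint.2
  refine Measure.ext_of_charFun (funext fun t => ?_)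
  rw [ProbabilityTheory.charFun_stdGaussian, charFun_apply,
    integral_withDensity_eq_integral_toReal_smul (by fun_prop [gaussianDensity])
      (ae_of_all _ fun _ => ENNReal.ofReal_lt_top),
    ← integral_cexp_inner_mul_gaussianDensity t]
  congr 1 with v
  rw [ENNReal.toReal_ofReal (by unfold gaussianDensity; positivity), Complex.real_smul, mul_comm]

theorem stdGaussian_map_inner {u : V} (hu : ‖u‖ = 1) :
    (ProbabilityTheory.stdGaussian V).map (fun v => ⟪v, u⟫) = gaussianReal 0 1 := by
  have hL : (fun v => ⟪v, u⟫) = ⇑(innerSL ℝ u) := funext fun v => real_inner_comm u v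
  rw [hL, IsGaussian.map_eq_gaussianReal, ProbabilityTheory.integral_strongDual_stdGaussian,
    ProbabilityTheory.variance_dual_stdGaussian, innerSL_apply_norm, hu]
  simp

theorem integral_comp_inner_stdGaussian {u : V} (hu : ‖u‖ = 1) {g : ℝ → ℝ}
    (hg : AEStronglyMeasurable g (gaussianReal 0 1)) :
    ∫ v, g ⟪v, u⟫ ∂(ProbabilityTheory.stdGaussian V) = ∫ s, g s ∂(gaussianReal 0 1) := by
  rw [← stdGaussian_map_inner hu] at hg ⊢
  exact (integral_map (by fun_prop) hg).symm

end StandardGaussian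

theorem stdGaussian_eq_stdGaussian (n : ℕ) :
    stdGaussian n = ProbabilityTheory.stdGaussian (EuclideanSpace ℝ (Fin n)) := by
  rw [← withDensity_gaussianDensity]
  simp only [stdGaussian, gaussianDensity, finrank_euclideanSpace_fin]

namespace ProbabilityTheory

theorem continuous_cdf (μ : Measure ℝ) [IsProbabilityMeasure μ] [NullSingletonClass μ] :
    Continuous (cdf μ) := by
  refine continuous_iff_continuousAt.2 fun x =>
    continuousAt_iff_continuous_left_right.2 ⟨?_, (cdf μ).right_continuous x⟩
  have hjump : (cdf μ).measure {x} = 0 := by rw [measure_cdf, measure_singleton]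
  rw [StieltjesFunction.measure_singleton, ENNReal.ofReal_eq_zero, sub_nonpos] at hjump
  rw [← continuousWithinAt_Iio_iff_Iic, (monotone_cdf μ).continuousWithinAt_Iio_iff_leftLim_eq]
  exact le_antisymm ((monotone_cdf μ).leftLim_le le_rfl) hjump

theorem Ioo_subset_range_cdf (μ : Measure ℝ) [IsProbabilityMeasure μ] [NullSingletonClass μ] :
    Ioo 0 1 ⊆ range (cdf μ) := by
  intro p hp
  obtain ⟨a, ha⟩ := ((tendsto_cdf_atBot μ).eventually (gt_mem_nhds hp.1)).exists
  obtain ⟨b, hb⟩ := ((tendsto_cdf_atTop μ).eventually (lt_mem_nhds hp.2)).exists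
  exact intermediate_value_univ a b (continuous_cdf μ) ⟨ha.le, hb.le⟩

end ProbabilityTheory

theorem stdGaussianCDF_eq_cdf : stdGaussianCDF = cdf (gaussianReal 0 1) := by
  ext a
  rw [ProbabilityTheory.cdf_eq_real, measureReal_def,
    ProbabilityTheory.gaussianReal_apply_eq_integral _ one_ne_zero,
    ENNReal.toReal_ofReal (setIntegral_nonneg measurableSet_Iic fun s _ =>
      ProbabilityTheory.gaussianPDFReal_nonneg _ _ _),
    stdGaussianCDF, ← integral_const_mul]
  simp [gaussianPDFReal]

theorem stdGaussianCDF_stdGaussianCDFInv {p : ℝ} (hp : p ∈ Ioo 0 1) :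
    stdGaussianCDF (stdGaussianCDFInv p) = p := by
  have := ProbabilityTheory.nullSingletonClass_gaussianReal (μ := 0) one_ne_zero
  refine Function.invFun_eq ?_
  rw [stdGaussianCDF_eq_cdf]
  exact ProbabilityTheory.Ioo_subset_range_cdf _ hp

theorem integral_ite_neg_le_gaussianReal (c : ℝ) :
    ∫ s, (if -c ≤ s then (1 : ℝ) else 0) ∂(gaussianReal 0 1) = stdGaussianCDF c := by
  have hsymm := ProbabilityTheory.gaussianReal_map_neg (μ := 0) (v := 1)
  rw [neg_zero] at hsymm
  simp_rw [← mem_Ici, ← indicator_apply (Ici (-c)) (fun _ => (1 : ℝ))]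
  rw [integral_indicator_const _ measurableSet_Ici, smul_eq_mul, mul_one, stdGaussianCDF_eq_cdf,
    ProbabilityTheory.cdf_eq_real]
  conv_rhs => rw [← hsymm, map_measureReal_apply measurable_neg measurableSet_Iic]
  simp

theorem setIntegral_Ioi_mul_exp_neg_sq_div_two (a : ℝ) :
    ∫ s in Ioi a, s * Real.exp (-s ^ 2 / 2) = Real.exp (-a ^ 2 / 2) := by
  have hderiv (s : ℝ) :
      HasDerivAt (fun y => -Real.exp (-y ^ 2 / 2)) (s * Real.exp (-s ^ 2 / 2)) s := by
    have h : HasDerivAt (fun y : ℝ => -y ^ 2 / 2) (-s) s := by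
      simpa using ((hasDerivAt_pow 2 s).neg.div_const 2).congr_deriv (by ring)
    exact h.exp.neg.congr_deriv (by ring)
  have hint : Integrable fun s : ℝ => s * Real.exp (-s ^ 2 / 2) := by
    simpa [neg_div, div_eq_inv_mul] using integrable_mul_exp_neg_mul_sq (b := 1 / 2) (by norm_num)
  have hlim : Filter.Tendsto (fun y : ℝ => -Real.exp (-y ^ 2 / 2)) Filter.atTop (𝓝 0) := by
    simpa [neg_div] using (Real.tendsto_exp_atBot.comp (Filter.tendsto_neg_atTop_atBot.comp
      ((Filter.tendsto_pow_atTop two_ne_zero).atTop_div_const two_pos))).neg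
  rw [integral_Ioi_of_hasDerivAt_of_tendsto' (fun s _ => hderiv s) hint.integrableOn hlim]
  ring

theorem integral_ite_neg_le_mul_gaussianReal (c : ℝ) :
    ∫ s, (if -c ≤ s then (1 : ℝ) else 0) * s ∂(gaussianReal 0 1) =
      (Real.sqrt (2 * π))⁻¹ * Real.exp (-c ^ 2 / 2) := by
  have h : (fun s => gaussianPDFReal 0 1 s • ((if -c ≤ s then (1 : ℝ) else 0) * s)) =
      (Ici (-c)).indicator fun s => (Real.sqrt (2 * π))⁻¹ * (s * Real.exp (-s ^ 2 / 2)) := by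
    ext s
    by_cases hs : -c ≤ s <;> simp [hs, gaussianPDFReal]
    ring
  rw [ProbabilityTheory.integral_gaussianReal_eq_integral_smul one_ne_zero, h,
    integral_indicator measurableSet_Ici, integral_Ici_eq_integral_Ioi, integral_const_mul,
    setIntegral_Ioi_mul_exp_neg_sq_div_two, neg_sq]

theorem integral_mul_le_integral_ite_mul {Ω : Type*} [MeasurableSpace Ω] {μ : Measure Ω}
    [IsFiniteMeasure μ] {Y F : Ω → ℝ} (hY : Integrable Y μ) (hF : AEStronglyMeasurable F μ)
    (hF01 : ∀ ω, F ω ∈ Icc 0 1) {a : ℝ}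
    (hmass : ∫ ω, F ω ∂μ = ∫ ω, (if a ≤ Y ω then (1 : ℝ) else 0) ∂μ) :
    ∫ ω, F ω * Y ω ∂μ ≤ ∫ ω, (if a ≤ Y ω then (1 : ℝ) else 0) * Y ω ∂μ := by
  set H : Ω → ℝ := fun ω => if a ≤ Y ω then 1 else 0
  have hH : AEStronglyMeasurable H μ :=
    ((measurable_const.ite measurableSet_Ici measurable_const).comp_aemeasurable
      hY.aemeasurable).aestronglyMeasurable
  have hH01 (ω : Ω) : H ω ∈ Icc 0 1 := by by_cases h : a ≤ Y ω <;> simp [H, h]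
  have hbound {G : Ω → ℝ} (hG : ∀ ω, G ω ∈ Icc 0 1) : ∀ᵐ ω ∂μ, ‖G ω‖ ≤ 1 :=
    ae_of_all _ fun ω => by
      rw [Real.norm_eq_abs, abs_le]
      constructor <;> linarith [(hG ω).1, (hG ω).2]
  have hFi : Integrable F μ := .of_bound hF 1 (hbound hF01)
  have hHi : Integrable H μ := .of_bound hH 1 (hbound hH01)
  have hFY : Integrable (fun ω => F ω * Y ω) μ := hY.bdd_mul hF (hbound hF01)
  have hHY : Integrable (fun ω => H ω * Y ω) μ := hY.bdd_mul hH (hbound hH01)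
  have hpos (ω : Ω) : 0 ≤ (H ω - F ω) * (Y ω - a) := by
    by_cases h : a ≤ Y ω
    · simp only [H, if_pos h]
      exact mul_nonneg (by linarith [(hF01 ω).2]) (by linarith)
    · simp only [H, if_neg h]
      exact mul_nonneg_of_nonpos_of_nonpos (by linarith [(hF01 ω).1]) (by linarith)
  have hexpand : ∫ ω, (H ω - F ω) * (Y ω - a) ∂μ =
      (∫ ω, H ω * Y ω ∂μ - ∫ ω, F ω * Y ω ∂μ) - a * (∫ ω, H ω ∂μ - ∫ ω, F ω ∂μ) := calc
    _ = ∫ ω, ((H ω * Y ω - F ω * Y ω) - a * (H ω - F ω)) ∂μ := by congr 1 with ω; ring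
    _ = _ := by
      rw [integral_sub (f := fun ω => H ω * Y ω - F ω * Y ω) (g := fun ω => a * (H ω - F ω))
        (hHY.sub hFY) ((hHi.sub hFi).const_mul a), integral_sub hHY hFY, integral_const_mul,
        integral_sub hHi hFi]
  have := integral_nonneg (μ := μ) (f := fun ω => (H ω - F ω) * (Y ω - a)) hpos
  rwa [hexpand, ← hmass, sub_self, mul_zero, sub_zero, sub_nonneg] at this

/-- fix `x`, a unit vector `u`, and `p ∈ (0,1)`. Every measurable
`f : ℝⁿ → [0,1]` with `E_{X ~ N(0,Iₙ)}[f(x + X)] = p` satisfies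
`E[f(x + X) (X ⬝ u)] ≤ (1/√(2π)) exp(-(Φ⁻¹ p)²/2)`, and the bound is attained by
the half-space indicator `h(z) = 1{(z - x) ⬝ u ≥ -Φ⁻¹(p)}`. -/
theorem halfspace_maximizes_directional_mass (n : ℕ)
    (x u : EuclideanSpace ℝ (Fin n)) (hu : ‖u‖ = 1)
    (p : ℝ) (hp : p ∈ Set.Ioo (0 : ℝ) 1) :
    (∀ f : EuclideanSpace ℝ (Fin n) → ℝ, Measurable f →
      (∀ t, f t ∈ Set.Icc (0 : ℝ) 1) →
      (∫ t, f (x + t) ∂(stdGaussian n)) = p →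
      (∫ t, f (x + t) * (inner ℝ t u : ℝ) ∂(stdGaussian n)) ≤
        (Real.sqrt (2 * π))⁻¹ * Real.exp (-(stdGaussianCDFInv p) ^ 2 / 2)) ∧
    (∫ t, (if -(stdGaussianCDFInv p) ≤ (inner ℝ ((x + t) - x) u : ℝ) then (1 : ℝ) else 0)
        * (inner ℝ t u : ℝ) ∂(stdGaussian n)) =
      (Real.sqrt (2 * π))⁻¹ * Real.exp (-(stdGaussianCDFInv p) ^ 2 / 2) := by
  set c := stdGaussianCDFInv p
  have hhalf : Measurable fun s : ℝ => if -c ≤ s then (1 : ℝ) else 0 :=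
    measurable_const.ite measurableSet_Ici measurable_const
  have hmass : ∫ t, (if -c ≤ ⟪t, u⟫ then (1 : ℝ) else 0) ∂(stdGaussian n) = p := by
    rw [stdGaussian_eq_stdGaussian, integral_comp_inner_stdGaussian hu hhalf.aestronglyMeasurable,
      integral_ite_neg_le_gaussianReal, stdGaussianCDF_stdGaussianCDFInv hp]
  have hvalue : ∫ t, (if -c ≤ ⟪t, u⟫ then (1 : ℝ) else 0) * ⟪t, u⟫ ∂(stdGaussian n) =
      (Real.sqrt (2 * π))⁻¹ * Real.exp (-c ^ 2 / 2) := by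
    rw [stdGaussian_eq_stdGaussian, integral_comp_inner_stdGaussian hu
      (g := fun s => (if -c ≤ s then (1 : ℝ) else 0) * s)
      (hhalf.mul measurable_id).aestronglyMeasurable, integral_ite_neg_le_mul_gaussianReal]
  refine ⟨fun f hf hf01 hfp => ?_, by simpa using hvalue⟩
  have : IsProbabilityMeasure (stdGaussian n) := by
    rw [stdGaussian_eq_stdGaussian]; infer_instance
  have hY : Integrable (fun t => ⟪t, u⟫) (stdGaussian n) := by
    simpa [stdGaussian_eq_stdGaussian, real_inner_comm] using
      IsGaussian.integrable_dual _ (innerSL ℝ u)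
  exact (integral_mul_le_integral_ite_mul hY (hf.comp (measurable_const_add x)).aestronglyMeasurable
    (fun t => hf01 (x + t)) (hfp.trans hmass.symm)).trans_eq hvalue
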